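/- arXiv:math/0605747 — 3 statements merged into one kernel-verified Lean document; each statement's English description precedes it below -/
import Mathlib

section
/- If V_k = {1, 2, …, m_k} and ∑_{k=1}^{∞} 1/m_k = +∞, then the set C[V_k] of all x ∈ [0,1] whose O¹-symbols satisfy g_n(x) ∈ V_n for all n has Lebesgue measure 0. -/
/-!
Write `σ_k = g_0 + ⋯ + g_{k-1}` and `q_n = σ_1 ⋯ σ_n`, so that `x = ∑ (-1)^n / q_{n+1}`.
Since `1/q_{n+1}` decreases, `x` lies within `1/q_{K+1} ≤ 1/(q_K (σ_K + 1))` of its `K`-th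
partial sum, which only depends on `g_0, …, g_{K-1}`. Covering the admissible points by these closed
intervals, one per admissible prefix, and passing from rank `K` to rank `K + 1` multiplies the
total length by at most `m_K / (m_K + 1)`, because
`∑_{c=1}^{M} 1/((s+c)(s+c+1)) = M/((s+1)(s+M+1))`. The closure therefore has measure at most
`2 ∏_{k<K} m_k/(m_k+1) ≤ 2 exp (-∑_{k<K} 1/(m_k+1))`, which tends to `0`.
-/

open MeasureTheory

noncomputable def osig (g : ℕ → ℕ) (k : ℕ) : ℝ := ∑ i ∈ Finset.range k, (g i : ℝ)

noncomputable def bO1inf (g : ℕ → ℕ) : ℝ :=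
  ∑' n : ℕ, (-1 : ℝ) ^ n / ∏ k ∈ Finset.range (n + 1), osig g (k + 1)

open Filter Topology Finset Function

theorem Antitone.abs_sub_alternating_series_le {f : ℕ → ℝ} {l : ℝ}
    (hfl : Tendsto (fun n ↦ ∑ i ∈ range n, (-1) ^ i * f i) atTop (𝓝 l)) (hfa : Antitone f)
    (K : ℕ) : |l - ∑ i ∈ range K, (-1) ^ i * f i| ≤ f K := by
  rw [abs_sub_le_iff]
  rcases Nat.even_or_odd' K with ⟨k, rfl | rfl⟩
  · have hlo := hfa.alternating_series_le_tendsto hfl k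
    have hhi := hfa.tendsto_le_alternating_series hfl k
    rw [sum_range_succ, pow_mul] at hhi
    norm_num at hhi
    constructor <;> linarith
  · have hhi := hfa.tendsto_le_alternating_series hfl k
    have hlo := hfa.alternating_series_le_tendsto hfl (k + 1)
    rw [show 2 * (k + 1) = 2 * k + 1 + 1 by ring, sum_range_succ, pow_succ, pow_mul] at hlo
    norm_num at hlo
    constructor <;> linarith

theorem Real.tendsto_prod_one_sub_of_not_summable {a : ℕ → ℝ} (ha₀ : ∀ k, 0 ≤ a k)
    (ha₁ : ∀ k, a k ≤ 1) (ha : ¬ Summable a) :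
    Tendsto (fun K ↦ ∏ k ∈ range K, (1 - a k)) atTop (𝓝 0) := by
  have hsum := (not_summable_iff_tendsto_nat_atTop_of_nonneg ha₀).1 ha
  refine squeeze_zero (fun K ↦ prod_nonneg fun k _ ↦ sub_nonneg.2 (ha₁ k)) (fun K ↦ ?_)
    (Real.tendsto_exp_atBot.comp (tendsto_neg_atTop_atBot.comp hsum))
  rw [comp_apply, comp_apply, ← sum_neg_distrib, Real.exp_sum]
  exact prod_le_prod (fun k _ ↦ sub_nonneg.2 (ha₁ k)) fun k _ ↦ Real.one_sub_le_exp_neg (a k)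

lemma tendsto_prod_div_add_one_of_not_summable {m : ℕ → ℕ}
    (hdiv : ¬ Summable fun k ↦ 1 / (m k : ℝ)) :
    Tendsto (fun K ↦ ∏ k ∈ range K, (m k : ℝ) / (m k + 1)) atTop (𝓝 0) := by
  have hdiv' : ¬ Summable fun k ↦ 1 / ((m k : ℝ) + 1) := by
    refine fun h ↦ hdiv <| (h.mul_left 2).of_nonneg_of_le (fun k ↦ by positivity) fun k ↦ ?_
    rcases Nat.eq_zero_or_pos (m k) with hk | hk
    · simp [hk]
    · have : (1 : ℝ) ≤ m k := by exact_mod_cast hk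
      rw [mul_one_div, div_le_div_iff₀ (by positivity) (by positivity)]
      linarith
  have hfactor : ∀ k, (m k : ℝ) / (m k + 1) = 1 - 1 / (m k + 1) := fun k ↦ by
    field_simp
    ring
  simp_rw [hfactor]
  exact Real.tendsto_prod_one_sub_of_not_summable (fun k ↦ by positivity)
    (fun k ↦ div_le_one_of_le₀ (by simp) (by positivity)) hdiv'

lemma sum_Icc_inv_mul_add_one {s : ℝ} (hs : 0 ≤ s) (M : ℕ) :
    ∑ c ∈ Icc 1 M, ((s + c) * (s + c + 1))⁻¹ = M / ((s + 1) * (s + M + 1)) := by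
  induction M with
  | zero => simp
  | succ M ih =>
    rw [sum_Icc_succ_top (by omega), ih]
    push_cast
    field_simp
    ring

namespace O1

/-- `denom g n` is `q_n = σ_1 ⋯ σ_n`, where `osig g k` is `σ_k = g_0 + ⋯ + g_{k-1}`. -/
noncomputable def denom (g : ℕ → ℕ) (n : ℕ) : ℝ := ∏ k ∈ range n, osig g (k + 1)

noncomputable def partialSum (g : ℕ → ℕ) (K : ℕ) : ℝ :=
  ∑ n ∈ range K, (-1) ^ n * (denom g (n + 1))⁻¹

noncomputable def radius (g : ℕ → ℕ) (K : ℕ) : ℝ := (denom g K * (osig g K + 1))⁻¹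

section Denominators

variable {g : ℕ → ℕ}

lemma osig_succ (g : ℕ → ℕ) (k : ℕ) : osig g (k + 1) = osig g k + g k :=
  sum_range_succ _ _

lemma osig_nonneg (g : ℕ → ℕ) (k : ℕ) : 0 ≤ osig g k := by
  unfold osig
  positivity

lemma le_osig (hg : ∀ n, 0 < g n) (k : ℕ) : (k : ℝ) ≤ osig g k := by
  simpa [osig] using card_nsmul_le_sum (range k) (fun i ↦ (g i : ℝ)) 1
    fun i _ ↦ Nat.one_le_cast.2 (hg i)

lemma denom_nonneg (g : ℕ → ℕ) (n : ℕ) : 0 ≤ denom g n :=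
  prod_nonneg fun k _ ↦ osig_nonneg g (k + 1)

lemma denom_pos (hg : ∀ n, 0 < g n) (n : ℕ) : 0 < denom g n :=
  prod_pos fun k _ ↦ (Nat.cast_pos.2 k.succ_pos).trans_le (le_osig hg (k + 1))

lemma denom_succ (g : ℕ → ℕ) (n : ℕ) : denom g (n + 1) = denom g n * osig g (n + 1) :=
  prod_range_succ _ _

lemma factorial_le_denom (hg : ∀ n, 0 < g n) (n : ℕ) : (n.factorial : ℝ) ≤ denom g n := by
  rw [← prod_range_add_one_eq_factorial]
  push_cast
  exact prod_le_prod (fun k _ ↦ by positivity) fun k _ ↦ by exact_mod_cast le_osig hg (k + 1)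

lemma denom_mono (hg : ∀ n, 0 < g n) : Monotone (denom g) :=
  monotone_nat_of_le_succ fun n ↦ by
    rw [denom_succ]
    exact le_mul_of_one_le_right (denom_nonneg g n)
      (le_trans (by simp) (le_osig hg (n + 1)))

lemma summable_inv_denom (hg : ∀ n, 0 < g n) : Summable fun n ↦ (denom g n)⁻¹ :=
  (Real.summable_pow_div_factorial 1).of_nonneg_of_le (fun n ↦ inv_nonneg.2 (denom_nonneg g n))
    fun n ↦ by simpa using inv_anti₀ (by positivity) (factorial_le_denom hg n)

lemma radius_nonneg (g : ℕ → ℕ) (K : ℕ) : 0 ≤ radius g K :=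
  inv_nonneg.2 (mul_nonneg (denom_nonneg g K) (by linarith [osig_nonneg g K]))

end Denominators

lemma bO1inf_eq_tsum (g : ℕ → ℕ) : bO1inf g = ∑' n, (-1) ^ n * (denom g (n + 1))⁻¹ := by
  simp_rw [bO1inf, div_eq_mul_inv]
  rfl

lemma abs_bO1inf_sub_partialSum_le {g : ℕ → ℕ} (hg : ∀ n, 0 < g n) (K : ℕ) :
    |bO1inf g - partialSum g K| ≤ radius g K := by
  have hanti : Antitone fun n ↦ (denom g (n + 1))⁻¹ := fun a b hab ↦
    inv_anti₀ (denom_pos hg _) (denom_mono hg (by omega))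
  have hsum : Summable fun n ↦ (-1) ^ n * (denom g (n + 1))⁻¹ :=
    ((summable_nat_add_iff 1).2 (summable_inv_denom hg)).alternating
  calc |bO1inf g - partialSum g K| ≤ (denom g (K + 1))⁻¹ := by
        rw [bO1inf_eq_tsum]
        exact hanti.abs_sub_alternating_series_le hsum.hasSum.tendsto_sum_nat K
    _ ≤ radius g K := by
        have hq := denom_pos hg K
        have hσ := osig_nonneg g K
        rw [radius, denom_succ, osig_succ]
        gcongr
        exact_mod_cast hg K

section PrefixCongr

variable {g g' : ℕ → ℕ} {K : ℕ}

lemma osig_congr (h : ∀ i < K, g i = g' i) {j : ℕ} (hj : j ≤ K) : osig g j = osig g' j :=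
  sum_congr rfl fun i hi ↦ by rw [h i ((mem_range.1 hi).trans_le hj)]

lemma denom_congr (h : ∀ i < K, g i = g' i) {n : ℕ} (hn : n ≤ K) : denom g n = denom g' n :=
  prod_congr rfl fun k hk ↦ osig_congr h (by have := mem_range.1 hk; omega)

lemma partialSum_congr (h : ∀ i < K, g i = g' i) : partialSum g K = partialSum g' K :=
  sum_congr rfl fun n hn ↦ by rw [denom_congr h (mem_range.1 hn)]

lemma radius_congr (h : ∀ i < K, g i = g' i) : radius g K = radius g' K := by
  rw [radius, radius, denom_congr h le_rfl, osig_congr h le_rfl]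

end PrefixCongr

lemma sum_radius_update_le {d : ℕ → ℕ} (hd : ∀ i, 0 < d i) (K M : ℕ) :
    ∑ c ∈ Icc 1 M, radius (update d K c) (K + 1) ≤ M / (M + 1) * radius d K := by
  set s := osig d K with hs_def
  have hs : 0 ≤ s := osig_nonneg d K
  have hq := denom_pos hd K
  have hupdate : ∀ c : ℕ,
      radius (update d K c) (K + 1) = (denom d K)⁻¹ * ((s + c) * (s + c + 1))⁻¹ := by
    intro c
    have hagree : ∀ i < K, update d K c i = d i := fun i hi ↦ update_of_ne hi.ne _ _
    rw [radius, denom_succ, osig_succ, denom_congr hagree le_rfl, osig_congr hagree le_rfl,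
      update_self, mul_assoc, mul_inv]
  calc ∑ c ∈ Icc 1 M, radius (update d K c) (K + 1)
      = (denom d K)⁻¹ * (M / ((s + 1) * (s + M + 1))) := by
        rw [sum_congr rfl fun c _ ↦ hupdate c, ← mul_sum, sum_Icc_inv_mul_add_one hs]
    _ = M / (s + M + 1) * radius d K := by
        rw [radius, ← hs_def]
        field_simp
    _ ≤ M / (M + 1) * radius d K := by
        gcongr
        · exact radius_nonneg d K
        · linarith

section Prefixes

open Classical

/-- Representatives of the cylinders of rank `K`: admissible values `1 ≤ d i ≤ m i` at the
positions `i < K`, and `1` at all later positions. -/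
noncomputable def prefixes (m : ℕ → ℕ) : ℕ → Finset (ℕ → ℕ)
  | 0 => {fun _ ↦ 1}
  | K + 1 => (prefixes m K ×ˢ Icc 1 (m K)).image fun p ↦ update p.1 K p.2

lemma pos_of_mem_prefixes {m : ℕ → ℕ} {K : ℕ} {d : ℕ → ℕ} (hd : d ∈ prefixes m K) (i : ℕ) : 0 < d i := by
  induction K generalizing d with
  | zero =>
    rw [prefixes, mem_singleton] at hd
    simp [hd]
  | succ K ih =>
    simp only [prefixes, mem_image, mem_product, mem_Icc] at hd
    obtain ⟨⟨d₀, c⟩, ⟨hd₀, hc, -⟩, rfl⟩ := hd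
    rcases eq_or_ne i K with rfl | hi
    · rw [update_self]
      omega
    · simpa [update_of_ne hi] using ih hd₀

lemma exists_mem_prefixes_eq {m g : ℕ → ℕ} (hg : ∀ n, 0 < g n) (hgm : ∀ n, g n ≤ m n)
    (K : ℕ) : ∃ d ∈ prefixes m K, ∀ i < K, d i = g i := by
  induction K with
  | zero => exact ⟨_, mem_singleton_self _, by simp⟩
  | succ K ih =>
    obtain ⟨d, hd, hdg⟩ := ih
    refine ⟨update d K (g K), ?_, fun i hi ↦ ?_⟩
    · rw [prefixes]
      exact mem_image.2 ⟨(d, g K), mem_product.2 ⟨hd, mem_Icc.2 ⟨hg K, hgm K⟩⟩, rfl⟩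
    · rcases eq_or_ne i K with rfl | hne
      · simp
      · rw [update_of_ne hne]
        exact hdg i (by omega)

lemma sum_radius_prefixes_le (m : ℕ → ℕ) (K : ℕ) :
    ∑ d ∈ prefixes m K, radius d K ≤ ∏ k ∈ range K, (m k : ℝ) / (m k + 1) := by
  induction K with
  | zero => simp [prefixes, radius, denom, osig]
  | succ K ih =>
    calc ∑ d ∈ prefixes m (K + 1), radius d (K + 1)
        ≤ ∑ p ∈ prefixes m K ×ˢ Icc 1 (m K), radius (update p.1 K p.2) (K + 1) :=
          sum_image_le_of_nonneg fun _ _ ↦ radius_nonneg _ _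
      _ = ∑ d ∈ prefixes m K, ∑ c ∈ Icc 1 (m K), radius (update d K c) (K + 1) :=
          sum_product _ _ _
      _ ≤ ∑ d ∈ prefixes m K, (m K : ℝ) / (m K + 1) * radius d K :=
          sum_le_sum fun d hd ↦ sum_radius_update_le (pos_of_mem_prefixes hd) K (m K)
      _ ≤ ∏ k ∈ range (K + 1), (m k : ℝ) / (m k + 1) := by
          rw [← mul_sum, prod_range_succ, mul_comm]
          gcongr

end Prefixes

noncomputable def cylinderCover (m : ℕ → ℕ) (K : ℕ) : Set ℝ :=
  ⋃ d ∈ prefixes m K, Metric.closedBall (partialSum d K) (radius d K)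

lemma isClosed_cylinderCover (m : ℕ → ℕ) (K : ℕ) : IsClosed (cylinderCover m K) :=
  (prefixes m K).finite_toSet.isClosed_biUnion fun _ _ ↦ Metric.isClosed_closedBall

lemma subset_cylinderCover (m : ℕ → ℕ) (K : ℕ) :
    {x : ℝ | ∃ g : ℕ → ℕ, (∀ n, 0 < g n) ∧ x = bO1inf g ∧ ∀ n, g n ≤ m n}
      ⊆ cylinderCover m K := by
  rintro _ ⟨g, hg, rfl, hgm⟩
  obtain ⟨d, hd, hdg⟩ := exists_mem_prefixes_eq hg hgm K
  refine Set.mem_biUnion hd ?_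
  rw [Metric.mem_closedBall, Real.dist_eq, partialSum_congr hdg, radius_congr hdg]
  exact abs_bO1inf_sub_partialSum_le hg K

lemma volume_cylinderCover_le (m : ℕ → ℕ) (K : ℕ) :
    volume (cylinderCover m K) ≤ ENNReal.ofReal (2 * ∏ k ∈ range K, (m k : ℝ) / (m k + 1)) :=
  calc volume (cylinderCover m K)
      ≤ ∑ d ∈ prefixes m K, volume (Metric.closedBall (partialSum d K) (radius d K)) :=
        measure_biUnion_finset_le _ _
    _ = ENNReal.ofReal (∑ d ∈ prefixes m K, 2 * radius d K) := by
        simp_rw [Real.volume_closedBall]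
        rw [ENNReal.ofReal_sum_of_nonneg fun d _ ↦ by linarith [radius_nonneg d K]]
    _ ≤ _ := by
        rw [← mul_sum]
        gcongr
        exact sum_radius_prefixes_le m K

end O1

theorem o1_CV_null_of_divergent_reciprocals_general
    (m : ℕ → ℕ)
    (hdiv : ¬ Summable (fun k => 1 / (m k : ℝ))) :
    volume (closure {x : ℝ | x ∈ Set.Icc (0 : ℝ) 1 ∧ ∃ g : ℕ → ℕ, (∀ n, 0 < g n) ∧
      x = bO1inf g ∧ ∀ n, g n ≤ m n}) = 0 := by
  have hlim := ENNReal.tendsto_ofReal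
    ((tendsto_prod_div_add_one_of_not_summable hdiv).const_mul 2)
  rw [mul_zero, ENNReal.ofReal_zero] at hlim
  refine nonpos_iff_eq_zero.1 (ge_of_tendsto' hlim fun K ↦ ?_)
  exact (measure_mono (closure_minimal (fun x hx ↦ O1.subset_cylinderCover m K hx.2)
    (O1.isClosed_cylinderCover m K))).trans (O1.volume_cylinderCover_le m K)

/-- Theorem 4: if `V_k = {1,…,m_k}` and `∑ 1/m_k = +∞`, then the
(closure of the) set of `x ∈ [0,1]` whose O¹-symbols satisfy `g_k(x) ≤ m_k` for all `k`
has Lebesgue measure `0`. -/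
theorem o1_CV_null_of_divergent_reciprocals
    (m : ℕ → ℕ) (hm : ∀ k, 0 < m k)
    (hdiv : ¬ Summable (fun k => 1 / (m k : ℝ))) :
    volume (closure {x : ℝ | x ∈ Set.Icc (0 : ℝ) 1 ∧ ∃ g : ℕ → ℕ, (∀ n, 0 < g n) ∧
      x = bO1inf g ∧ ∀ n, g n ≤ m n}) = 0 :=
  o1_CV_null_of_divergent_reciprocals_general m hdiv
end

section
/- Let m be a fixed positive integer and V = ℕ \ {1,2,…,m} = {m+1, m+2, …}. Then the set C[V] of all x ∈ [0,1] with g_n(x) ∈ V for all n has positive Lebesgue measure; moreover λ(C[V]) > 1/(m+1)². -/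
/-!
The O¹-symbols of `x` are produced greedily by `t ↦ 1 - ⌊1/t⌋ t` acting on the normalized
position `t` of `x` in its cylinders, and the next symbol exceeds `m` iff `t ≤ 1/(σ + m + 1)`,
where `σ` is the current partial sum of the symbols. By self-similarity, the set of
`t ∈ (0, 1/(σ+m+1)]` from which some later symbol is `≤ m` has measure at most `B(σ+m+1)`,
`B(a) = m/(a(a+1))`: the branch `⌊1/t⌋ = s` is an affine copy, scaled by `1/s`, of the gap
`[0, 1/(s+1)] \ (0, 1/(s+m+1)]` (of length `g(s) = 1/(s+1) - 1/(s+m+1)`) together with the bad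
set of state `s`, and `(g(s) + B(s+m+1))/s + B(s+1) ≤ B(s)` telescopes. For `σ = 0` this leaves
measure at least `1/(m+1) - m/((m+1)(m+2)) = 2/((m+1)(m+2)) > 1/(m+1)^2` for the points all of
whose symbols exceed `m`, and each of them is the sum of its O¹-series.
-/

open MeasureTheory

open Set
open scoped ENNReal

theorem ENNReal.tsum_le_of_add_le {h F : ℕ → ℝ≥0∞} (hF : ∀ n, h n + F (n + 1) ≤ F n) :
    ∑' n, h n ≤ F 0 := by
  have partial_le : ∀ N, ∑ n ∈ Finset.range N, h n + F N ≤ F 0 := by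
    intro N
    induction N with
    | zero => simp
    | succ N ih =>
      calc ∑ n ∈ Finset.range (N + 1), h n + F (N + 1)
          = ∑ n ∈ Finset.range N, h n + (h N + F (N + 1)) := by
            rw [Finset.sum_range_succ, add_assoc]
        _ ≤ F 0 := le_trans (by gcongr; exact hF N) ih
  exact ENNReal.tsum_le_of_sum_range_le fun N => le_trans le_self_add (partial_le N)

theorem Real.volume_preimage_sub_mul {a : ℝ} (ha : a ≠ 0) (b : ℝ) (A : Set ℝ) :
    volume ((fun t => b - a * t) ⁻¹' A) = ENNReal.ofReal |a⁻¹| * volume A := by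
  have : (fun t => b - a * t) = (fun u => b + u) ∘ ((-a) * ·) := by
    funext t; simp [sub_eq_add_neg]
  rw [this, preimage_comp, Real.volume_preimage_mul_left (neg_ne_zero.2 ha),
    measure_preimage_add, inv_neg, abs_neg]

namespace O1

/- A point of the rank-`n` cylinder with symbol sum `σ = σ_n` is
`x = p_n + (-1)^n t / (σ_1 ⋯ σ_n)`, `p_n` the `n`-th partial sum of its O¹-series, with
`t ∈ [0, 1/(σ+1)]`. Then `σ_{n+1} = ⌊1/t⌋`, the next normalized position is `shift t`, and the
next symbol `σ_{n+1} - σ` exceeds `m` iff `t ∈ admissible m σ`; `state x n` is `σ_n`. -/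

noncomputable def shift (t : ℝ) : ℝ := 1 - ⌊t⁻¹⌋₊ * t

def admissible (m σ : ℕ) : Set ℝ := Ioc 0 ((σ + m + 1 : ℝ)⁻¹)

def DigitsExceed (m : ℕ) : ℕ → ℕ → ℝ → Prop
  | 0, _, _ => True
  | N + 1, σ, t => t ∈ admissible m σ ∧ DigitsExceed m N ⌊t⁻¹⌋₊ (shift t)

noncomputable def state (x : ℝ) : ℕ → ℕ
  | 0 => 0
  | k + 1 => ⌊(shift^[k] x)⁻¹⌋₊

def exceedSet (m : ℕ) : Set ℝ :=
  {x : ℝ | x ∈ Icc (0 : ℝ) 1 ∧ ∃ g : ℕ → ℕ, x = bO1inf g ∧ ∀ n, m < g n}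

noncomputable def tailBound (m : ℕ) (a : ℝ) : ℝ := m / (a * (a + 1))

theorem shift_mem_Ico {t : ℝ} (hs : 0 < ⌊t⁻¹⌋₊) :
    shift t ∈ Ico 0 ((⌊t⁻¹⌋₊ + 1 : ℝ)⁻¹) := by
  have ht : 0 < t := inv_pos.1 (lt_of_lt_of_le one_pos (Nat.floor_pos.1 hs))
  have hle : (⌊t⁻¹⌋₊ : ℝ) * t ≤ 1 := by
    simpa [ht.ne'] using mul_le_mul_of_nonneg_right (Nat.floor_le (inv_nonneg.2 ht.le)) ht.le
  have hlt : 1 < (⌊t⁻¹⌋₊ + 1 : ℝ) * t := by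
    simpa [ht.ne'] using mul_lt_mul_of_pos_right (Nat.lt_floor_add_one t⁻¹) ht
  have hs' : (0 : ℝ) < ⌊t⁻¹⌋₊ := by exact_mod_cast hs
  constructor
  · rw [shift]; linarith
  · rw [shift, inv_eq_one_div ((⌊t⁻¹⌋₊ : ℝ) + 1), lt_div_iff₀ (by positivity)]
    nlinarith [mul_lt_mul_of_pos_left hlt hs']

theorem le_floor_inv_of_mem_admissible {m σ : ℕ} {t : ℝ} (ht : t ∈ admissible m σ) :
    σ + m + 1 ≤ ⌊t⁻¹⌋₊ := by
  apply Nat.le_floor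
  push_cast
  exact (le_inv_comm₀ ht.1 (by positivity)).1 ht.2

theorem DigitsExceed.of_succ {m N σ : ℕ} {t : ℝ} (h : DigitsExceed m (N + 1) σ t) :
    DigitsExceed m N σ t := by
  induction N generalizing σ t with
  | zero => trivial
  | succ N ih => exact ⟨h.1, ih h.2⟩

theorem DigitsExceed.mono {m σ : ℕ} {t : ℝ} {N N' : ℕ} (hN : N ≤ N')
    (h : DigitsExceed m N' σ t) : DigitsExceed m N σ t := by
  induction hN with
  | refl => exact h
  | step _ ih => exact ih h.of_succ

theorem DigitsExceed.iterate {m : ℕ} {x : ℝ} (k N : ℕ) (h : DigitsExceed m (k + N) 0 x) :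
    DigitsExceed m N (state x k) (shift^[k] x) := by
  induction k generalizing N with
  | zero => simpa [state] using h
  | succ k ih =>
    have hnext := (ih (N + 1) (by rwa [← add_assoc, add_right_comm])).2
    rwa [Function.iterate_succ_apply']

theorem volume_setOf_shift_mem_le (m σ : ℕ) (A : ℕ → Set ℝ) :
    volume {t ∈ admissible m σ | shift t ∈ A ⌊t⁻¹⌋₊} ≤
      ∑' c : ℕ, ENNReal.ofReal ((σ + m + 1 + c : ℕ) : ℝ)⁻¹ * volume (A (σ + m + 1 + c)) :=
  calc _ ≤ volume (⋃ c : ℕ,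
          (fun t => 1 - ((σ + m + 1 + c : ℕ) : ℝ) * t) ⁻¹' A (σ + m + 1 + c)) := by
        refine measure_mono fun t ⟨ht, hA⟩ => ?_
        obtain ⟨c, hc⟩ := Nat.exists_eq_add_of_le (le_floor_inv_of_mem_admissible ht)
        exact mem_iUnion.2 ⟨c, by rw [mem_preimage, ← hc]; exact hA⟩
    _ ≤ _ := measure_iUnion_le _
    _ = _ := tsum_congr fun c => by
      rw [Real.volume_preimage_sub_mul (by positivity), abs_of_pos (by positivity)]

theorem volume_Ico_diff_admissible (m s : ℕ) :
    volume (Ico 0 ((s + 1 : ℝ)⁻¹) \ admissible m s) ≤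
      ENNReal.ofReal ((s + 1 : ℝ)⁻¹ - (s + m + 1 : ℝ)⁻¹) := by
  have hsub : admissible m s ⊆ Icc 0 ((s + 1 : ℝ)⁻¹) :=
    Ioc_subset_Icc_self.trans
      (Icc_subset_Icc_right (by gcongr; linarith [m.cast_nonneg (α := ℝ)]))
  calc _ ≤ volume (Icc 0 ((s + 1 : ℝ)⁻¹) \ admissible m s) :=
        measure_mono (sdiff_subset_sdiff_left Ico_subset_Icc_self)
    _ = _ := by
        rw [measure_sdiff hsub measurableSet_Ioc.nullMeasurableSet measure_Ioc_lt_top.ne,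
          admissible, Real.volume_Icc, Real.volume_Ioc, sub_zero, sub_zero,
          ENNReal.ofReal_sub _ (by positivity)]

theorem tailBound_le_of_le (m : ℕ) {a b : ℝ} (ha : 0 < a) (hab : a ≤ b) :
    tailBound m b ≤ tailBound m a := by
  unfold tailBound; gcongr; linarith

theorem tailBound_nonneg (m : ℕ) {a : ℝ} (ha : 0 ≤ a) : 0 ≤ tailBound m a := by
  unfold tailBound; positivity

theorem ofReal_inv_mul_gap_add_tailBound_le {m : ℕ} (hm : 0 < m) {s : ℕ} (hs : 0 < s) :
    ENNReal.ofReal (s : ℝ)⁻¹ * (ENNReal.ofReal (((s : ℝ) + 1)⁻¹ - ((s : ℝ) + m + 1)⁻¹) +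
        ENNReal.ofReal (tailBound m (s + m + 1))) + ENNReal.ofReal (tailBound m (s + 1 : ℕ)) ≤
      ENNReal.ofReal (tailBound m s) := by
  have hm' : (1 : ℝ) ≤ m := by exact_mod_cast hm
  have hs' : (0 : ℝ) < s := by exact_mod_cast hs
  have hgap_nonneg : 0 ≤ ((s : ℝ) + 1)⁻¹ - ((s : ℝ) + m + 1)⁻¹ :=
    sub_nonneg.2 (by gcongr; linarith)
  have hgap : ((s : ℝ) + 1)⁻¹ - ((s : ℝ) + m + 1)⁻¹ ≤ tailBound m (s + 1) := by
    rw [inv_sub_inv (by positivity) (by positivity), tailBound]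
    apply div_le_div₀ (by positivity) (by linarith) (by positivity)
    nlinarith
  have key : (s : ℝ)⁻¹ * (((s : ℝ) + 1)⁻¹ - ((s : ℝ) + m + 1)⁻¹ + tailBound m (s + m + 1)) +
      tailBound m (s + 1) ≤ tailBound m s :=
    calc _ ≤ (s : ℝ)⁻¹ * (tailBound m (s + 1) + tailBound m (s + 1)) + tailBound m (s + 1) := by
          gcongr
          exact tailBound_le_of_le m (by positivity) (by linarith)
      _ = tailBound m s := by
          unfold tailBound
          field_simp
          ring
  have htail_nonneg : 0 ≤ tailBound m (s + m + 1) := tailBound_nonneg m (by positivity)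
  rw [← ENNReal.ofReal_add hgap_nonneg htail_nonneg, ← ENNReal.ofReal_mul (by positivity),
    Nat.cast_succ, ← ENNReal.ofReal_add (by positivity) (tailBound_nonneg m (by positivity))]
  exact ENNReal.ofReal_le_ofReal key

theorem volume_admissible_diff_le {m : ℕ} (hm : 0 < m) (N σ : ℕ) :
    volume (admissible m σ \ {t | DigitsExceed m N σ t}) ≤
      ENNReal.ofReal (tailBound m (σ + m + 1)) := by
  induction N generalizing σ with
  | zero => simp [DigitsExceed]
  | succ N ih =>
    set A : ℕ → Set ℝ := fun s => Ico 0 ((s + 1 : ℝ)⁻¹) \ {u | DigitsExceed m N s u}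
    have hsub : admissible m σ \ {t | DigitsExceed m (N + 1) σ t} ⊆
        {t ∈ admissible m σ | shift t ∈ A ⌊t⁻¹⌋₊} := by
      rintro t ⟨ht, hbad⟩
      refine ⟨ht, shift_mem_Ico ?_, fun h => hbad ⟨ht, h⟩⟩
      have := le_floor_inv_of_mem_admissible ht
      omega
    have hA (s : ℕ) : volume (A s) ≤ ENNReal.ofReal ((s + 1 : ℝ)⁻¹ - (s + m + 1 : ℝ)⁻¹) +
        ENNReal.ofReal (tailBound m (s + m + 1)) :=
      calc volume (A s)
          ≤ volume ((Ico 0 ((s + 1 : ℝ)⁻¹) \ admissible m s) ∪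
              (admissible m s \ {u | DigitsExceed m N s u})) :=
            measure_mono fun u ⟨hu, hbad⟩ => by
              by_cases h : u ∈ admissible m s <;> simp_all
        _ ≤ _ := (measure_union_le _ _).trans
            (add_le_add (volume_Ico_diff_admissible m s) (ih s))
    calc _ ≤ volume {t ∈ admissible m σ | shift t ∈ A ⌊t⁻¹⌋₊} := measure_mono hsub
      _ ≤ _ := volume_setOf_shift_mem_le m σ A
      _ ≤ _ := ENNReal.tsum_le_tsum fun c => by gcongr; exact hA _
      _ ≤ _ := ENNReal.tsum_le_of_add_le fun c =>
        ofReal_inv_mul_gap_add_tailBound_le hm (s := σ + m + 1 + c) (by positivity)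
      _ = _ := by norm_num

theorem eq_sum_add_remainder {t a : ℕ → ℝ} (ha : ∀ k, a k ≠ 0)
    (ht : ∀ k, t (k + 1) = 1 - a k * t k) (N : ℕ) :
    t 0 = ∑ n ∈ Finset.range N, (-1) ^ n / ∏ k ∈ Finset.range (n + 1), a k +
      (-1) ^ N * t N / ∏ k ∈ Finset.range N, a k := by
  induction N with
  | zero => simp
  | succ N ih =>
    have hP : ∏ k ∈ Finset.range N, a k ≠ 0 := Finset.prod_ne_zero_iff.2 fun k _ => ha k
    rw [ih, Finset.sum_range_succ, Finset.prod_range_succ, ht, add_assoc]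
    congr 1
    field_simp [ha N]
    ring

theorem hasSum_of_eq_one_sub_mul {t a : ℕ → ℝ} (ha : ∀ k, 2 ≤ a k)
    (ht : ∀ k, t (k + 1) = 1 - a k * t k) (ht_le : ∀ k, |t k| ≤ 1) :
    HasSum (fun n => (-1) ^ n / ∏ k ∈ Finset.range (n + 1), a k) (t 0) := by
  have hP (n : ℕ) : (2 : ℝ) ^ n ≤ ∏ k ∈ Finset.range n, a k := by
    simpa using
      Finset.prod_le_prod (s := Finset.range n) (fun _ _ => zero_le_two) fun k _ => ha k
  have hbound (n : ℕ) (r : ℝ) (hr : |r| ≤ 1) :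
      ‖(-1) ^ n * r / ∏ k ∈ Finset.range n, a k‖ ≤ (1 / 2) ^ n := by
    rw [Real.norm_eq_abs, abs_div, abs_mul, abs_pow, abs_neg, abs_one, one_pow, one_mul,
      one_div_pow, abs_of_pos (lt_of_lt_of_le (by positivity) (hP n))]
    exact div_le_div₀ zero_le_one hr (by positivity) (hP n)
  have hsum : Summable (fun n => (-1) ^ n / ∏ k ∈ Finset.range (n + 1), a k) := by
    refine Summable.of_norm_bounded (summable_geometric_two.comp_injective (add_left_injective 1))
      fun n => ?_
    simpa using hbound (n + 1) 1 (by simp)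
  rw [hsum.hasSum_iff_tendsto_nat]
  have hrem : Filter.Tendsto (fun N => (-1) ^ N * t N / ∏ k ∈ Finset.range N, a k)
      Filter.atTop (nhds 0) :=
    squeeze_zero_norm (fun N => hbound N (t N) (ht_le N))
      (tendsto_pow_atTop_nhds_zero_of_lt_one (by norm_num) (by norm_num))
  have hlim := (tendsto_const_nhds (x := t 0)).sub hrem
  rw [sub_zero] at hlim
  refine hlim.congr fun N => ?_
  rw [eq_sum_add_remainder (fun k => (zero_lt_two.trans_le (ha k)).ne') ht N]
  ring

theorem mem_exceedSet_of_forall_digitsExceed {m : ℕ} (hm : 0 < m) {x : ℝ}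
    (hx : ∀ N, DigitsExceed m N 0 x) : x ∈ exceedSet m := by
  have hadm (k : ℕ) : shift^[k] x ∈ admissible m (state x k) :=
    (DigitsExceed.iterate k 1 (hx _)).1
  have hstep (k : ℕ) : state x k + m + 1 ≤ state x (k + 1) :=
    le_floor_inv_of_mem_admissible (hadm k)
  set g : ℕ → ℕ := fun k => state x (k + 1) - state x k
  have hosig (k : ℕ) : osig g k = state x k := by
    induction k with
    | zero => simp [osig, state]
    | succ k ih =>
      rw [osig, Finset.sum_range_succ, ← osig, ih, Nat.cast_sub (by linarith [hstep k])]
      ring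
  have hle_one (k : ℕ) : |shift^[k] x| ≤ 1 := by
    rw [abs_of_pos (hadm k).1]
    exact (hadm k).2.trans
      (inv_le_one_of_one_le₀ (by linarith [(state x k).cast_nonneg (α := ℝ)]))
  refine ⟨⟨(hadm 0).1.le, (abs_le.1 (hle_one 0)).2⟩, g, ?_,
    fun n => show m < state x (n + 1) - state x n by have := hstep n; omega⟩
  refine (HasSum.tsum_eq (hasSum_of_eq_one_sub_mul (t := fun k => shift^[k] x) (fun k => ?_)
    (fun k => ?_) hle_one)).symm
  · rw [hosig]
    exact_mod_cast (show 2 ≤ state x (k + 1) by have := hstep k; omega)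
  · rw [hosig, Function.iterate_succ_apply', shift]
    rfl

theorem ofReal_inv_sub_tailBound_le_volume_exceedSet {m : ℕ} (hm : 0 < m) :
    ENNReal.ofReal ((m + 1 : ℝ)⁻¹ - tailBound m (m + 1)) ≤ volume (exceedSet m) := by
  have hcover :
      admissible m 0 ⊆ exceedSet m ∪ ⋃ N, admissible m 0 \ {t | DigitsExceed m N 0 t} := by
    intro x hx
    by_cases h : ∀ N, DigitsExceed m N 0 x
    · exact Or.inl (mem_exceedSet_of_forall_digitsExceed hm h)
    · obtain ⟨N, hN⟩ := not_forall.1 h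
      exact Or.inr (mem_iUnion.2 ⟨N, hx, hN⟩)
  have hbad : volume (⋃ N, admissible m 0 \ {t | DigitsExceed m N 0 t}) ≤
      ENNReal.ofReal (tailBound m (m + 1)) := by
    rw [Monotone.measure_iUnion fun N N' hN => sdiff_subset_sdiff_right fun t ht => ht.mono hN]
    exact iSup_le fun N => by simpa using volume_admissible_diff_le hm N 0
  have hvol : volume (admissible m 0) = ENNReal.ofReal (m + 1 : ℝ)⁻¹ := by
    simp [admissible, Real.volume_Ioc, add_comm]
  rw [ENNReal.ofReal_sub _ (tailBound_nonneg m (by positivity)), tsub_le_iff_right, ← hvol]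
  exact (measure_mono hcover).trans ((measure_union_le _ _).trans (add_le_add le_rfl hbad))

theorem one_div_sq_lt_ofReal_inv_sub_tailBound {m : ℕ} (hm : 0 < m) :
    (1 : ℝ≥0∞) / ((m : ℝ≥0∞) + 1) ^ 2 < ENNReal.ofReal ((m + 1 : ℝ)⁻¹ - tailBound m (m + 1)) := by
  have hm' : (1 : ℝ) ≤ m := by exact_mod_cast hm
  have hreal : 1 / ((m : ℝ) + 1) ^ 2 < (m + 1 : ℝ)⁻¹ - tailBound m (m + 1) := by
    rw [tailBound, inv_eq_one_div, div_sub_div _ _ (by positivity) (by positivity),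
      div_lt_div_iff₀ (by positivity) (by positivity)]
    nlinarith
  convert (ENNReal.ofReal_lt_ofReal_iff_of_nonneg (by positivity)).2 hreal
  rw [ENNReal.ofReal_div_of_pos (by positivity), ENNReal.ofReal_pow (by positivity),
    ENNReal.ofReal_add (by positivity) zero_le_one, ENNReal.ofReal_natCast, ENNReal.ofReal_one]

end O1

/-- Theorem 6: for `V = {m+1, m+2, …}`, the set `C[V]` (closure of the
set of `x` all of whose O¹-symbols exceed `m`) has positive Lebesgue measure; moreover
`λ(C[V]) > 1/(m+1)²`. -/
theorem o1_CV_tail_positive_measure (m : ℕ) (hm : 0 < m) :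
    0 < volume (closure {x : ℝ | x ∈ Set.Icc (0 : ℝ) 1 ∧ ∃ g : ℕ → ℕ,
      x = bO1inf g ∧ ∀ n, m < g n}) ∧
    (1 : ENNReal) / ((m : ENNReal) + 1) ^ 2 <
      volume (closure {x : ℝ | x ∈ Set.Icc (0 : ℝ) 1 ∧ ∃ g : ℕ → ℕ,
        x = bO1inf g ∧ ∀ n, m < g n}) := by
  have key : (1 : ENNReal) / ((m : ENNReal) + 1) ^ 2 < volume (closure (O1.exceedSet m)) :=
    (O1.one_div_sq_lt_ofReal_inv_sub_tailBound hm).trans_le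
      ((O1.ofReal_inv_sub_tailBound_le_volume_exceedSet hm).trans (measure_mono subset_closure))
  exact ⟨bot_le.trans_lt key, key⟩
end

section
/- Let ξ = Ō¹(ξ_1, ξ_2, …) where ξ_k are independent random variables with P(ξ_k = m) = p_{mk}, p_{mk} ≥ 0, ∑_m p_{mk} = 1. Then ξ has a discrete (purely atomic) distribution if and only if ∏_{k=1}^∞ max_m p_{mk} > 0, and ξ has a continuous distribution if and only if this infinite product diverges to 0. -/
open MeasureTheory

/-!
For symbols `g₀, g₁, … ≥ 1` the alternating series `x = bO1inf g` lies in `[1/(g₀+1), 1/g₀)`, so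
`g₀ = ⌈1/x⌉ - 1`; merging the first two symbols maps `x` to `1 - g₀ x`, so all symbols are
recovered one by one and `bO1inf` is injective on positive sequences. Hence
`P(ξ = x) ≤ P(ξₖ = gₖ for k < n) ≤ ∏_{k<n} max_m p_{mk}`, which tends to the infinite product;
this gives continuity when the product vanishes. When the product is positive,
`∑ₖ (1 - max_m p_{mk}) ≤ -log ∏ₖ max_m p_{mk} < ∞`, so by Borel–Cantelli almost surely `ξₖ`
eventually equals a mode of its law, and `ξ` lies in the countable image of the sequences that
eventually agree with the modes. The two cases exclude each other because an atomless
probability measure gives measure zero to every countable set.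
-/

open Finset Filter Topology
open scoped ENNReal

theorem StrictAnti.alternating_tsum_mem_Ico {f : ℕ → ℝ} (hf : Summable f) (hanti : StrictAnti f) :
    ∑' n, (-1) ^ n * f n ∈ Set.Ico (f 0 - f 1) (f 0) := by
  have hsum : Summable fun n => (-1 : ℝ) ^ n * f n :=
    Summable.of_norm_bounded hf.abs fun n => by simp
  have hlim := hsum.hasSum.tendsto_sum_nat
  constructor
  · simpa [sum_range_succ, ← sub_eq_add_neg] using
      hanti.antitone.alternating_series_le_tendsto hlim 1
  · calc ∑' n, (-1) ^ n * f n ≤ f 0 - (f 1 - f 2) := by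
          simpa [sum_range_succ, ← sub_eq_add_neg, sub_add] using
            hanti.antitone.tendsto_le_alternating_series hlim 1
      _ < f 0 := by linarith [hanti (show 1 < 2 by norm_num)]

section O1Series

variable {g : ℕ → ℕ}

theorem osig_succ (g : ℕ → ℕ) (k : ℕ) : osig g (k + 1) = osig g k + g k :=
  sum_range_succ _ _

theorem natCast_le_osig (hg : ∀ k, 0 < g k) (k : ℕ) : (k : ℝ) ≤ osig g k := by
  induction k with
  | zero => simp [osig]
  | succ k ih =>
    rw [osig_succ]
    push_cast
    linarith [show (1 : ℝ) ≤ g k by exact_mod_cast hg k]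

noncomputable def o1Denom (g : ℕ → ℕ) (n : ℕ) : ℝ := ∏ k ∈ range (n + 1), osig g (k + 1)

theorem o1Denom_succ (g : ℕ → ℕ) (n : ℕ) : o1Denom g (n + 1) = o1Denom g n * osig g (n + 2) :=
  prod_range_succ _ _

theorem bO1inf_eq_tsum (g : ℕ → ℕ) : bO1inf g = ∑' n, (-1) ^ n * (o1Denom g n)⁻¹ := rfl

theorem two_le_osig_add_two (hg : ∀ k, 0 < g k) (n : ℕ) : 2 ≤ osig g (n + 2) := by
  have := natCast_le_osig hg (n + 2)
  push_cast at this
  linarith [(n.cast_nonneg : (0 : ℝ) ≤ n)]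

theorem two_pow_le_o1Denom (hg : ∀ k, 0 < g k) (n : ℕ) : (2 : ℝ) ^ n ≤ o1Denom g n := by
  induction n with
  | zero => simpa [o1Denom] using natCast_le_osig hg 1
  | succ n ih =>
    rw [pow_succ, o1Denom_succ]
    exact mul_le_mul ih (two_le_osig_add_two hg n) zero_le_two
      ((by positivity : (0 : ℝ) ≤ 2 ^ n).trans ih)

theorem o1Denom_pos (hg : ∀ k, 0 < g k) (n : ℕ) : 0 < o1Denom g n :=
  lt_of_lt_of_le (by positivity) (two_pow_le_o1Denom hg n)

theorem strictAnti_inv_o1Denom (hg : ∀ k, 0 < g k) : StrictAnti fun n => (o1Denom g n)⁻¹ := by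
  refine strictAnti_nat_of_succ_lt fun n => inv_strictAnti₀ (o1Denom_pos hg n) ?_
  rw [o1Denom_succ]
  nlinarith [o1Denom_pos hg n, two_le_osig_add_two hg n]

theorem summable_inv_o1Denom (hg : ∀ k, 0 < g k) : Summable fun n => (o1Denom g n)⁻¹ := by
  refine Summable.of_nonneg_of_le (fun n => (inv_pos.2 (o1Denom_pos hg n)).le)
    (fun n => ?_) (summable_geometric_two)
  rw [one_div, inv_pow]
  exact inv_anti₀ (by positivity) (two_pow_le_o1Denom hg n)

theorem summable_alternating_inv_o1Denom (hg : ∀ k, 0 < g k) :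
    Summable fun n => (-1 : ℝ) ^ n * (o1Denom g n)⁻¹ :=
  Summable.of_norm_bounded (summable_inv_o1Denom hg) fun n => by
    simp [abs_of_pos (o1Denom_pos hg n)]

theorem ceil_inv_bO1inf (hg : ∀ k, 0 < g k) : ⌈(bO1inf g)⁻¹⌉₊ = g 0 + 1 := by
  obtain ⟨hlow, hhigh⟩ :=
    (strictAnti_inv_o1Denom hg).alternating_tsum_mem_Ico (summable_inv_o1Denom hg)
  have h0 : o1Denom g 0 = g 0 := by simp [o1Denom, osig]
  have h1 : o1Denom g 1 = g 0 * (g 0 + g 1) := by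
    simp [o1Denom, osig, prod_range_succ, sum_range_succ]
  rw [← bO1inf_eq_tsum, h0, h1] at hlow
  rw [← bO1inf_eq_tsum, h0] at hhigh
  have hg0 : (1 : ℝ) ≤ g 0 := by exact_mod_cast hg 0
  have hg1 : (1 : ℝ) ≤ g 1 := by exact_mod_cast hg 1
  have hlow' : ((g 0 : ℝ) + 1)⁻¹ ≤ bO1inf g := by
    have key : ((g 0 : ℝ))⁻¹ - ((g 0 : ℝ) * (g 0 + g 1))⁻¹ - ((g 0 : ℝ) + 1)⁻¹
        = (g 1 - 1) / ((g 0 : ℝ) * (g 0 + g 1) * (g 0 + 1)) := by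
      field_simp
      ring
    have : 0 ≤ (g 1 - 1) / ((g 0 : ℝ) * (g 0 + g 1) * (g 0 + 1)) :=
      div_nonneg (by linarith) (by positivity)
    linarith
  have hpos : 0 < bO1inf g := lt_of_lt_of_le (by positivity) hlow'
  rw [Nat.ceil_eq_iff (by omega), Nat.add_sub_cancel]
  push_cast
  exact ⟨(lt_inv_comm₀ (by positivity) hpos).2 hhigh, (inv_le_comm₀ hpos (by positivity)).2 hlow'⟩

def mergeFirstTwo (g : ℕ → ℕ) : ℕ → ℕ
  | 0 => g 0 + g 1
  | k + 1 => g (k + 2)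

theorem mergeFirstTwo_pos (hg : ∀ k, 0 < g k) (k : ℕ) : 0 < mergeFirstTwo g k := by
  cases k with
  | zero => exact Nat.add_pos_left (hg 0) _
  | succ k => exact hg (k + 2)

theorem osig_mergeFirstTwo (g : ℕ → ℕ) (k : ℕ) :
    osig (mergeFirstTwo g) (k + 1) = osig g (k + 2) := by
  induction k with
  | zero => simp [osig, sum_range_succ, mergeFirstTwo]
  | succ k ih => rw [osig_succ, ih, osig_succ g (k + 2)]; rfl

theorem o1Denom_succ_eq_mul_mergeFirstTwo (g : ℕ → ℕ) (n : ℕ) :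
    o1Denom g (n + 1) = g 0 * o1Denom (mergeFirstTwo g) n := by
  simp only [o1Denom, prod_range_succ' _ (n + 1), osig_mergeFirstTwo]
  simp [osig, mul_comm]

theorem bO1inf_mergeFirstTwo (hg : ∀ k, 0 < g k) :
    bO1inf (mergeFirstTwo g) = 1 - g 0 * bO1inf g := by
  have hg0 : (g 0 : ℝ) ≠ 0 := by exact_mod_cast (hg 0).ne'
  have hterm : ∀ n, (-1 : ℝ) ^ (n + 1) * (o1Denom g (n + 1))⁻¹
      = -(g 0 : ℝ)⁻¹ * ((-1) ^ n * (o1Denom (mergeFirstTwo g) n)⁻¹) := fun n => by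
    rw [o1Denom_succ_eq_mul_mergeFirstTwo, mul_inv, pow_succ]
    ring
  rw [bO1inf_eq_tsum g, (summable_alternating_inv_o1Denom hg).tsum_eq_zero_add, tsum_congr hterm,
    tsum_mul_left, ← bO1inf_eq_tsum]
  simp [o1Denom, osig]
  field_simp
  ring

theorem head_eq_of_bO1inf_eq {h : ℕ → ℕ} (hg : ∀ k, 0 < g k) (hh : ∀ k, 0 < h k)
    (heq : bO1inf g = bO1inf h) : g 0 = h 0 := by
  have := ceil_inv_bO1inf hg
  rw [heq, ceil_inv_bO1inf hh] at this
  omega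

theorem osig_eq_of_bO1inf_eq {h : ℕ → ℕ} (hg : ∀ k, 0 < g k) (hh : ∀ k, 0 < h k)
    (heq : bO1inf g = bO1inf h) (n : ℕ) : osig g n = osig h n := by
  induction n generalizing g h with
  | zero => simp [osig]
  | succ n ih =>
    cases n with
    | zero => simp [osig, head_eq_of_bO1inf_eq hg hh heq]
    | succ n =>
      rw [← osig_mergeFirstTwo, ← osig_mergeFirstTwo]
      refine ih (mergeFirstTwo_pos hg) (mergeFirstTwo_pos hh) ?_
      rw [bO1inf_mergeFirstTwo hg, bO1inf_mergeFirstTwo hh, heq, head_eq_of_bO1inf_eq hg hh heq]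

theorem injOn_bO1inf : Set.InjOn bO1inf {g | ∀ k, 0 < g k} := by
  intro g hg h hh heq
  funext k
  have hk := osig_eq_of_bO1inf_eq hg hh heq k
  have hk1 := osig_eq_of_bO1inf_eq hg hh heq (k + 1)
  rw [osig_succ, osig_succ, hk] at hk1
  exact_mod_cast add_left_cancel hk1

end O1Series

theorem measurable_o1Denom (n : ℕ) : Measurable fun g : ℕ → ℕ => o1Denom g n := by
  unfold o1Denom osig
  fun_prop

theorem Filter.Tendsto.exists_forall_ge_of_pos {α : Type*} {f : α → ℝ}
    (hf : Tendsto f cofinite (𝓝 0)) {a₁ : α} (ha₁ : 0 < f a₁) : ∃ a₀, ∀ a, f a ≤ f a₀ := by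
  have hfin : {a | f a₁ ≤ f a}.Finite := by
    simpa using Filter.eventually_cofinite.1 (hf.eventually (gt_mem_nhds ha₁))
  obtain ⟨a₀, ha₀, hmax⟩ := Set.exists_max_image _ f hfin ⟨a₁, le_refl (f a₁)⟩
  refine ⟨a₀, fun a => ?_⟩
  by_cases ha : f a₁ ≤ f a
  · exact hmax a ha
  · exact (not_le.1 ha).le.trans ha₀

section PartialProducts

variable {q : ℕ → ℝ}

theorem iInf_prod_range_le (hq0 : ∀ k, 0 ≤ q k) (n : ℕ) :
    ⨅ n, ∏ k ∈ range n, q k ≤ ∏ k ∈ range n, q k :=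
  ciInf_le ⟨0, by rintro _ ⟨n, rfl⟩; exact prod_nonneg fun k _ => hq0 k⟩ n

theorem tendsto_prod_range_iInf (hq0 : ∀ k, 0 ≤ q k) (hq1 : ∀ k, q k ≤ 1) :
    Tendsto (fun n => ∏ k ∈ range n, q k) atTop (𝓝 (⨅ n, ∏ k ∈ range n, q k)) := by
  refine tendsto_atTop_ciInf (antitone_nat_of_succ_le fun n => ?_)
    ⟨0, by rintro _ ⟨n, rfl⟩; exact prod_nonneg fun k _ => hq0 k⟩
  rw [prod_range_succ]
  exact mul_le_of_le_one_right (prod_nonneg fun k _ => hq0 k) (hq1 n)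

theorem pos_of_iInf_prod_range_pos (hq0 : ∀ k, 0 ≤ q k)
    (hQ : 0 < ⨅ n, ∏ k ∈ range n, q k) (k : ℕ) : 0 < q k := by
  refine (hq0 k).lt_of_ne fun hk => hQ.not_ge ?_
  calc ⨅ n, ∏ k ∈ range n, q k ≤ ∏ j ∈ range (k + 1), q j := iInf_prod_range_le hq0 _
    _ = 0 := prod_eq_zero (self_mem_range_succ k) hk.symm

theorem summable_one_sub_of_iInf_prod_range_pos (hq0 : ∀ k, 0 ≤ q k) (hq1 : ∀ k, q k ≤ 1)
    (hQ : 0 < ⨅ n, ∏ k ∈ range n, q k) : Summable fun k => 1 - q k := by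
  have hqpos := pos_of_iInf_prod_range_pos hq0 hQ
  refine summable_of_sum_range_le (c := -Real.log (⨅ n, ∏ k ∈ range n, q k))
    (fun k => sub_nonneg.2 (hq1 k)) fun n => ?_
  calc ∑ k ∈ range n, (1 - q k) ≤ ∑ k ∈ range n, -Real.log (q k) :=
        sum_le_sum fun k _ => by linarith [Real.log_le_sub_one_of_pos (hqpos k)]
    _ = -Real.log (∏ k ∈ range n, q k) := by
        rw [Real.log_prod fun k _ => (hqpos k).ne', sum_neg_distrib]
    _ ≤ -Real.log (⨅ n, ∏ k ∈ range n, q k) :=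
        neg_le_neg (Real.log_le_log hQ (iInf_prod_range_le hq0 n))

end PartialProducts

theorem countable_setOf_eventually_eq {β : Type*} [Countable β] (m : ℕ → β) :
    {g : ℕ → β | ∀ᶠ k in atTop, g k = m k}.Countable := by
  have hunion : {g : ℕ → β | ∀ᶠ k in atTop, g k = m k}
      = ⋃ N, {g : ℕ → β | ∀ k, N ≤ k → g k = m k} := by
    ext g
    simp [eventually_atTop]
  rw [hunion]
  refine Set.countable_iUnion fun N => ?_
  refine Set.countable_of_injective_of_countable_image
    (f := fun g (i : Fin N) => g i) (fun g hg h hh hgh => funext fun k => ?_) (Set.to_countable _)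
  by_cases hk : k < N
  · exact congrFun hgh ⟨k, hk⟩
  · rw [hg k (not_lt.1 hk), hh k (not_lt.1 hk)]

section Distribution

variable {f : ℕ → ℝ}

theorem summable_of_tsum_eq_one (hf : ∑' m, f m = 1) : Summable f := by
  by_contra hs
  simp [tsum_eq_zero_of_not_summable hs] at hf

theorem le_one_of_tsum_eq_one (hf0 : ∀ m, 0 ≤ f m) (hf : ∑' m, f m = 1) (m : ℕ) : f m ≤ 1 :=
  hf ▸ (summable_of_tsum_eq_one hf).le_tsum m fun j _ => hf0 j

theorem ciSup_le_one_of_tsum_eq_one (hf0 : ∀ m, 0 ≤ f m) (hf : ∑' m, f m = 1) :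
    ⨆ m, f m ≤ 1 :=
  ciSup_le (le_one_of_tsum_eq_one hf0 hf)

theorem le_ciSup_of_tsum_eq_one (hf0 : ∀ m, 0 ≤ f m) (hf : ∑' m, f m = 1) (m : ℕ) :
    f m ≤ ⨆ m, f m :=
  le_ciSup ⟨1, by rintro _ ⟨m, rfl⟩; exact le_one_of_tsum_eq_one hf0 hf m⟩ m

theorem exists_eq_ciSup_of_tsum_eq_one (hf0 : ∀ m, 0 ≤ f m) (hf : ∑' m, f m = 1)
    (hpos : 0 < ⨆ m, f m) : ∃ m₀, f m₀ = ⨆ m, f m := by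
  obtain ⟨m₁, hm₁⟩ := exists_lt_of_lt_ciSup hpos
  obtain ⟨m₀, hm₀⟩ :=
    (summable_of_tsum_eq_one hf).tendsto_cofinite_zero.exists_forall_ge_of_pos hm₁
  exact ⟨m₀, le_antisymm (le_ciSup_of_tsum_eq_one hf0 hf m₀) (ciSup_le hm₀)⟩

end Distribution

section RandomSymbols

variable {Ω : Type*} [MeasurableSpace Ω] {P : Measure Ω}

theorem measure_forall_eq_le_prod {β : Type*} [MeasurableSpace β] [MeasurableSingletonClass β]
    {ξk : ℕ → Ω → β} (hindep : ProbabilityTheory.iIndepFun ξk P) (g : ℕ → β) (n : ℕ) :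
    P {ω | ∀ k, ξk k ω = g k} ≤ ∏ k ∈ range n, P {ω | ξk k ω = g k} :=
  calc P {ω | ∀ k, ξk k ω = g k} ≤ P (⋂ k ∈ range n, ξk k ⁻¹' {g k}) :=
        measure_mono fun _ hω => Set.mem_iInter₂.2 fun k _ => hω k
    _ = ∏ k ∈ range n, P {ω | ξk k ω = g k} :=
        hindep.measure_inter_preimage_eq_mul _ fun k _ => measurableSet_singleton (g k)

theorem measure_forall_eq_eq_zero_of_iInf_prod_eq_zero {β : Type*} [MeasurableSpace β]
    [MeasurableSingletonClass β] {ξk : ℕ → Ω → β} (hindep : ProbabilityTheory.iIndepFun ξk P)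
    {q : ℕ → ℝ} (hq0 : ∀ k, 0 ≤ q k) (hq1 : ∀ k, q k ≤ 1)
    (hξq : ∀ k b, P {ω | ξk k ω = b} ≤ ENNReal.ofReal (q k))
    (hQ : ⨅ n, ∏ k ∈ range n, q k = 0) (g : ℕ → β) :
    P {ω | ∀ k, ξk k ω = g k} = 0 := by
  have hlim : Tendsto (fun n => ENNReal.ofReal (∏ k ∈ range n, q k)) atTop (𝓝 0) := by
    simpa [hQ] using (ENNReal.tendsto_ofReal (tendsto_prod_range_iInf hq0 hq1))
  refine le_antisymm (ge_of_tendsto' hlim fun n => ?_) zero_le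
  calc P {ω | ∀ k, ξk k ω = g k} ≤ ∏ k ∈ range n, P {ω | ξk k ω = g k} :=
        measure_forall_eq_le_prod hindep g n
    _ ≤ ∏ k ∈ range n, ENNReal.ofReal (q k) := prod_le_prod' fun k _ => hξq k (g k)
    _ = ENNReal.ofReal (∏ k ∈ range n, q k) :=
        (ENNReal.ofReal_prod_of_nonneg fun k _ => hq0 k).symm

variable {ξk : ℕ → Ω → ℕ}

theorem aemeasurable_bO1inf_comp (hmeas : ∀ k, Measurable (ξk k))
    (hpos : ∀ᵐ ω ∂P, ∀ k, 0 < ξk k ω) : AEMeasurable (fun ω => bO1inf fun k => ξk k ω) P := by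
  refine aemeasurable_of_tendsto_metrizable_ae'
    (f := fun N ω => ∑ n ∈ range N, (-1 : ℝ) ^ n * (o1Denom (fun k => ξk k ω) n)⁻¹)
    (fun N => Measurable.aemeasurable ?_) ?_
  · have hseq : Measurable fun ω k => ξk k ω := measurable_pi_lambda _ hmeas
    exact Finset.measurable_sum _ fun n _ =>
      measurable_const.mul ((measurable_o1Denom n).comp hseq).inv
  · filter_upwards [hpos] with ω hω
    exact (summable_alternating_inv_o1Denom hω).hasSum.tendsto_sum_nat

theorem measure_bO1inf_comp_eq_zero (hpos : ∀ᵐ ω ∂P, ∀ k, 0 < ξk k ω)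
    (hatom : ∀ g : ℕ → ℕ, P {ω | ∀ k, ξk k ω = g k} = 0) (x : ℝ) :
    P {ω | bO1inf (fun k => ξk k ω) = x} = 0 := by
  set T := {g : ℕ → ℕ | (∀ k, 0 < g k) ∧ bO1inf g = x}
  have hT : T.Subsingleton := fun g hg h hh => injOn_bO1inf hg.1 hh.1 (hg.2.trans hh.2.symm)
  have hnull : P {ω | (fun k => ξk k ω) ∈ T} = 0 := by
    rcases hT.eq_empty_or_singleton with hT | ⟨g, hT⟩
    · simp [hT]
    · simpa [hT, funext_iff] using hatom g
  refine measure_mono_null_ae ?_ hnull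
  filter_upwards [hpos] with ω hω hx using ⟨hω, hx⟩

theorem tsum_measure_setOf_ne_ne_top [IsProbabilityMeasure P] (hmeas : ∀ k, Measurable (ξk k))
    {m : ℕ → ℕ} {q : ℕ → ℝ} (hq0 : ∀ k, 0 ≤ q k) (hq1 : ∀ k, q k ≤ 1)
    (hsum : Summable fun k => 1 - q k)
    (hm : ∀ k, P {ω | ξk k ω = m k} = ENNReal.ofReal (q k)) :
    ∑' k, P {ω | ξk k ω ≠ m k} ≠ ∞ := by
  have hcompl : ∀ k, P {ω | ξk k ω ≠ m k} = ENNReal.ofReal (1 - q k) := fun k => by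
    rw [← Set.compl_ofPred,
      prob_compl_eq_one_sub (measurableSet_eq_fun (hmeas k) measurable_const), hm,
      ← ENNReal.ofReal_one, ENNReal.ofReal_sub _ (hq0 k)]
  rw [tsum_congr hcompl, ← ENNReal.ofReal_tsum_of_nonneg (fun k => sub_nonneg.2 (hq1 k)) hsum]
  exact ENNReal.ofReal_ne_top

theorem map_bO1inf_comp_eq_one [IsProbabilityMeasure P]
    (hX : AEMeasurable (fun ω => bO1inf fun k => ξk k ω) P) {m : ℕ → ℕ}
    (hm : ∑' k, P {ω | ξk k ω ≠ m k} ≠ ∞) :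
    P.map (fun ω => bO1inf fun k => ξk k ω) (bO1inf '' {g | ∀ᶠ k in atTop, g k = m k}) = 1 := by
  have hS := ((countable_setOf_eventually_eq m).image bO1inf).measurableSet
  have := Measure.isProbabilityMeasure_map hX
  rw [← mem_ae_iff_prob_eq_one hS, mem_ae_map_iff hX hS]
  filter_upwards [ae_eventually_notMem hm] with ω hω
  exact ⟨_, hω.mono fun k hk => not_not.1 hk, rfl⟩

end RandomSymbols

/-- Theorem 8: for `ξ = Ō¹(ξ_1,ξ_2,…)` with independent O¹-symbols `ξ_k`,
`P(ξ_k = m) = p_{mk}`, the distribution of `ξ` is discrete (purely atomic, i.e. carried by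
a countable set) iff `∏_{k=1}^∞ max_m p_{mk} > 0`, and it is continuous (every singleton is
null) iff that infinite product (the infimum of the partial products) equals `0`. -/
theorem o1_random_discrete_iff_product_positive
    {Ω : Type*} [MeasurableSpace Ω] (P : Measure Ω) [IsProbabilityMeasure P]
    (ξk : ℕ → Ω → ℕ) (hmeas : ∀ k, Measurable (ξk k))
    (hindep : ProbabilityTheory.iIndepFun ξk P)
    (p : ℕ → ℕ → ℝ) (hp0 : ∀ m k, 0 ≤ p m k) (hzero : ∀ k, p 0 k = 0)
    (hsum : ∀ k, ∑' m, p m k = 1)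
    (hp : ∀ m k, P {ω | ξk k ω = m} = ENNReal.ofReal (p m k))
    (ξ : Ω → ℝ) (hξ : ∀ ω, ξ ω = bO1inf (fun k => ξk k ω)) :
    ((∃ s : Set ℝ, s.Countable ∧ P.map ξ s = 1) ↔
      0 < ⨅ n, ∏ k ∈ Finset.range n, ⨆ m, p m k) ∧
    ((∀ x : ℝ, P.map ξ {x} = 0) ↔
      (⨅ n, ∏ k ∈ Finset.range n, ⨆ m, p m k) = 0) := by
  obtain rfl : ξ = fun ω => bO1inf fun k => ξk k ω := funext hξ
  set X : Ω → ℝ := fun ω => bO1inf fun k => ξk k ω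
  have hq0 : ∀ k, 0 ≤ ⨆ m, p m k := fun k => Real.iSup_nonneg (hp0 · k)
  have hq1 : ∀ k, ⨆ m, p m k ≤ 1 := fun k => ciSup_le_one_of_tsum_eq_one (hp0 · k) (hsum k)
  have hpos : ∀ᵐ ω ∂P, ∀ k, 0 < ξk k ω := ae_all_iff.2 fun k => by
    simpa [Nat.pos_iff_ne_zero, ae_iff, hzero] using hp 0 k
  have hX := aemeasurable_bO1inf_comp hmeas hpos
  have hcont (hQ : ⨅ n, ∏ k ∈ range n, ⨆ m, p m k = 0) (x : ℝ) : P.map X {x} = 0 := by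
    rw [Measure.map_apply_of_aemeasurable hX (measurableSet_singleton x)]
    exact measure_bO1inf_comp_eq_zero hpos
      (measure_forall_eq_eq_zero_of_iInf_prod_eq_zero hindep hq0 hq1 (fun k m => hp m k ▸
        ENNReal.ofReal_le_ofReal (le_ciSup_of_tsum_eq_one (hp0 · k) (hsum k) m)) hQ) x
  have hdisc (hQ : 0 < ⨅ n, ∏ k ∈ range n, ⨆ m, p m k) :
      ∃ s : Set ℝ, s.Countable ∧ P.map X s = 1 := by
    choose m hm using fun k => exists_eq_ciSup_of_tsum_eq_one (hp0 · k) (hsum k)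
      (pos_of_iInf_prod_range_pos hq0 hQ k)
    exact ⟨_, (countable_setOf_eventually_eq m).image bO1inf, map_bO1inf_comp_eq_one hX
      (tsum_measure_setOf_ne_ne_top hmeas hq0 hq1
        (summable_one_sub_of_iInf_prod_range_pos hq0 hq1 hQ) fun k => hm k ▸ hp (m k) k)⟩
  have hexcl : (∃ s : Set ℝ, s.Countable ∧ P.map X s = 1) → (∀ x, P.map X {x} = 0) → False := by
    rintro ⟨s, hs, hs1⟩ hatom
    have : NullSingletonClass (P.map X) := ⟨hatom⟩
    simp [hs.measure_zero] at hs1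
  have hQ0 : 0 ≤ ⨅ n, ∏ k ∈ range n, ⨆ m, p m k :=
    Real.iInf_nonneg fun n => prod_nonneg fun k _ => hq0 k
  exact ⟨⟨fun hd => hQ0.lt_of_ne fun h => hexcl hd (hcont h.symm), hdisc⟩,
    ⟨fun hc => (hQ0.eq_or_lt.resolve_right fun h => hexcl (hdisc h) hc).symm, hcont⟩⟩
end
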